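/- arXiv:2302.12473 — 2 statements merged into one kernel-verified Lean document; each statement's English description precedes it below -/
import Mathlib

section
/- The elementary symmetric polynomials form a subalgebra basis for the symmetric polynomials in three variables: with respect to the degree-lexicographic monomial order on MvPolynomial (Fin 3) ℚ in which X0 > X1 > X2, the initial algebra of the subalgebra A of all symmetric polynomials (those invariant under every permutation of the variables) equals the ℚ-subalgebra generated by the three monomials X0, X0·X1, and X0·X1·X2. In particular, for every nonzero symmetric polynomial f, its leading term lies in Algebra.adjoin ℚ {X0, X0·X1, X0·X1·X2}. -/
open MvPolynomial

noncomputable section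

/-- `m` is the degree-lexicographic monomial order on `Fin n →₀ ℕ` (total degree first,
ties broken lexicographically with `X 0 > X 1 > …`). -/
def MonomialOrder.IsDegLex {n : ℕ} (m : MonomialOrder (Fin n)) : Prop :=
  ∀ a b : Fin n →₀ ℕ, m.toSyn a < m.toSyn b ↔
    ((a.sum fun _ e => e) < (b.sum fun _ e => e) ∨
      ((a.sum fun _ e => e) = (b.sum fun _ e => e) ∧ toLex a < toLex b))

variable {n : ℕ}

/-- The degree (largest exponent vector) of a polynomial with respect to a monomial order. -/
def MonomialOrder.degree' (m : MonomialOrder (Fin n)) (f : MvPolynomial (Fin n) ℚ) :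
    Fin n →₀ ℕ :=
  m.toSyn.symm (f.support.sup fun d => m.toSyn d)

/-- The leading term of a polynomial with respect to a monomial order. -/
def MonomialOrder.leadTerm (m : MonomialOrder (Fin n)) (f : MvPolynomial (Fin n) ℚ) :
    MvPolynomial (Fin n) ℚ :=
  monomial (m.degree' f) (f.coeff (m.degree' f))

/-- The initial algebra of a subalgebra `A`: the `ℚ`-subalgebra generated by the leading
terms of the nonzero elements of `A`. -/
def MonomialOrder.initialAlgebra (m : MonomialOrder (Fin n))
    (A : Subalgebra ℚ (MvPolynomial (Fin n) ℚ)) : Subalgebra ℚ (MvPolynomial (Fin n) ℚ) :=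
  Algebra.adjoin ℚ {p | ∃ a ∈ A, a ≠ 0 ∧ p = m.leadTerm a}

/-!
In a symmetric polynomial every permutation of a monomial occurs with it. Moving a larger
exponent to an earlier variable keeps the total degree and increases the monomial
lexicographically, so the deglex leading exponent `d` is weakly decreasing and
`X^d = X₀^(d₀-d₁) (X₀X₁)^(d₁-d₂) (X₀X₁X₂)^d₂`. Conversely, the same monotonicity forces the
leading monomial of the elementary symmetric polynomial `e_k` to be `X₀⋯X_{k-1}`.
-/

open Finset

theorem MvPolynomial.esymm_ne_zero {σ R : Type*} [Fintype σ] [CommSemiring R] [Nontrivial R]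
    {k : ℕ} (hk : k ≤ Fintype.card σ) : esymm σ R k ≠ 0 := by
  classical
  rw [← support_nonempty, support_esymm]
  exact (powersetCard_nonempty.mpr (by simpa using hk)).image _

theorem monomial_mem_adjoin_of_antitone {R : Type*} [CommSemiring R] {d : Fin 3 →₀ ℕ}
    (hd : Antitone d) (c : R) :
    monomial d c ∈
      Algebra.adjoin R ({X 0, X 0 * X 1, X 0 * X 1 * X 2} : Set (MvPolynomial (Fin 3) R)) := by
  obtain ⟨a, ha⟩ := Nat.exists_eq_add_of_le (hd (show (0 : Fin 3) ≤ 1 by decide))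
  obtain ⟨b, hb⟩ := Nat.exists_eq_add_of_le (hd (show (1 : Fin 3) ≤ 2 by decide))
  have hfactor : monomial d c = C c * X 0 ^ a * (X 0 * X 1) ^ b * (X 0 * X 1 * X 2) ^ d 2 := by
    rw [monomial_eq, Finsupp.prod_fintype _ _ (by simp), Fin.prod_univ_three, ha, hb]
    ring
  have hgen {p : MvPolynomial (Fin 3) R} (hp : p ∈ ({X 0, X 0 * X 1, X 0 * X 1 * X 2} : Set _)) :
      p ∈ Algebra.adjoin R ({X 0, X 0 * X 1, X 0 * X 1 * X 2} : Set _) :=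
    Algebra.subset_adjoin hp
  rw [hfactor, ← algebraMap_eq]
  refine mul_mem (mul_mem (mul_mem (Subalgebra.algebraMap_mem _ c) ?_) ?_) ?_ <;>
    exact pow_mem (hgen (by simp)) _

namespace MonomialOrder

variable {m : MonomialOrder (Fin n)}

theorem leadTerm_eq_leadingTerm (m : MonomialOrder (Fin n)) (f : MvPolynomial (Fin n) ℚ) :
    m.leadTerm f = m.leadingTerm f := rfl

theorem IsDegLex.antitone_degree {R : Type*} [CommSemiring R] (hm : m.IsDegLex)
    {f : MvPolynomial (Fin n) R} (hf : f.IsSymmetric) : Antitone (m.degree f) := by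
  rcases eq_or_ne f 0 with rfl | hf0
  · rw [degree_zero]
    exact antitone_const
  intro i j hij
  by_contra! hlt
  set d := m.degree f
  set d' := Finsupp.mapDomain (Equiv.swap i j) d
  have hd'_mem : d' ∈ f.support := by
    rw [mem_support_iff, ← hf (Equiv.swap i j),
      coeff_rename_mapDomain _ (Equiv.swap i j).injective]
    exact m.coeff_degree_ne_zero_iff.mpr hf0
  have hd'_apply (k : Fin n) : d' k = d (Equiv.swap i j k) := by
    simp [d', Finsupp.mapDomain_equiv_apply]
  have hsum : (d'.sum fun _ e => e) = d.sum fun _ e => e :=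
    Finsupp.sum_mapDomain_index (fun _ => rfl) (fun _ _ _ => rfl)
  have hlex : toLex d < toLex d' := by
    refine Finsupp.Lex.lt_iff.mpr ⟨i, fun k hk => ?_, ?_⟩
    · rw [ofLex_toLex, ofLex_toLex, hd'_apply,
        Equiv.swap_apply_of_ne_of_ne hk.ne (hk.trans_le hij).ne]
    · rwa [ofLex_toLex, ofLex_toLex, hd'_apply, Equiv.swap_apply_left]
  exact ((hm d d').mpr (.inr ⟨hsum.symm, hlex⟩)).not_ge (m.le_degree hd'_mem)

theorem IsDegLex.degree_esymm {R : Type*} [CommSemiring R] [Nontrivial R] (hm : m.IsDegLex)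
    {k : ℕ} (hk : k ≤ n) :
    m.degree (esymm (Fin n) R k) = ∑ i : Fin n with i.val < k, Finsupp.single i 1 := by
  classical
  obtain ⟨t, ht, hdt⟩ := mem_image.mp <|
    support_esymm (Fin n) R k ▸ m.degree_mem_support (esymm_ne_zero (by simpa using hk))
  rw [mem_powersetCard_univ] at ht
  have hanti := hdt ▸ hm.antitone_degree (esymm_isSymmetric (Fin n) R k)
  have hdown {i j : Fin n} (hij : i ≤ j) (hj : j ∈ t) : i ∈ t := by
    have := hanti hij
    simp only [Finsupp.coe_finsetSum, Finset.sum_apply, Finsupp.single_apply,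
      sum_ite_eq', hj] at this
    by_contra hi
    simp [hi] at this
  rw [← hdt]
  congr 1
  ext i
  rw [mem_filter_univ]
  constructor
  · intro hi
    have := card_le_card fun j hj => hdown (mem_Iic.mp hj) hi
    rw [Fin.card_Iic, ht] at this
    omega
  · intro hik
    by_contra hi
    have := card_le_card fun j hj => mem_Iio.mpr (lt_of_not_ge fun hij => hi (hdown hij hj))
    rw [Fin.card_Iio, ht] at this
    omega

theorem leadingTerm_mem_initialAlgebra {A : Subalgebra ℚ (MvPolynomial (Fin n) ℚ)}
    {f : MvPolynomial (Fin n) ℚ} (hfA : f ∈ A) (hf0 : f ≠ 0) :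
    m.leadingTerm f ∈ m.initialAlgebra A :=
  Algebra.subset_adjoin ⟨f, hfA, hf0, rfl⟩

theorem monomial_degree_mem_initialAlgebra {A : Subalgebra ℚ (MvPolynomial (Fin n) ℚ)}
    {f : MvPolynomial (Fin n) ℚ} (hfA : f ∈ A) (hf0 : f ≠ 0) :
    monomial (m.degree f) 1 ∈ m.initialAlgebra A := by
  have hc : m.leadingCoeff f ≠ 0 := m.leadingCoeff_ne_zero_iff.mpr hf0
  have : monomial (m.degree f) 1 = C (m.leadingCoeff f)⁻¹ * m.leadingTerm f := by
    rw [leadingTerm, C_mul_monomial, inv_mul_cancel₀ hc]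
  rw [this, ← algebraMap_eq]
  exact mul_mem (Subalgebra.algebraMap_mem _ _) (leadingTerm_mem_initialAlgebra hfA hf0)

theorem IsDegLex.prod_X_mem_initialAlgebra (hm : m.IsDegLex) {k : ℕ} (hk : k ≤ n) :
    ∏ i : Fin n with i.val < k, X i ∈ m.initialAlgebra (symmetricSubalgebra (Fin n) ℚ) := by
  have := monomial_degree_mem_initialAlgebra (m := m)
    ((mem_symmetricSubalgebra _).mpr (esymm_isSymmetric (Fin n) ℚ k))
    (esymm_ne_zero (by simpa using hk))
  rwa [hm.degree_esymm hk, monomial_sum_one] at this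

theorem IsDegLex.leadingTerm_mem_adjoin {R : Type*} [CommSemiring R] {m : MonomialOrder (Fin 3)}
    (hm : m.IsDegLex) {f : MvPolynomial (Fin 3) R} (hf : f.IsSymmetric) :
    m.leadingTerm f ∈
      Algebra.adjoin R ({X 0, X 0 * X 1, X 0 * X 1 * X 2} : Set (MvPolynomial (Fin 3) R)) :=
  monomial_mem_adjoin_of_antitone (hm.antitone_degree hf) _

end MonomialOrder

/-- The elementary symmetric polynomials form a subalgebra basis for the symmetric
polynomials in three variables. -/
theorem initialAlgebra_symmetric (m : MonomialOrder (Fin 3)) (hm : m.IsDegLex) :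
    m.initialAlgebra (symmetricSubalgebra (Fin 3) ℚ) =
      Algebra.adjoin ℚ ({X 0, X 0 * X 1, X 0 * X 1 * X 2} : Set (MvPolynomial (Fin 3) ℚ)) ∧
    ∀ f : MvPolynomial (Fin 3) ℚ, f.IsSymmetric → f ≠ 0 →
      m.leadTerm f ∈
        Algebra.adjoin ℚ ({X 0, X 0 * X 1, X 0 * X 1 * X 2} :
          Set (MvPolynomial (Fin 3) ℚ)) := by
  simp only [MonomialOrder.leadTerm_eq_leadingTerm]
  refine ⟨le_antisymm ?_ ?_, fun f hf _ => hm.leadingTerm_mem_adjoin hf⟩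
  · refine Algebra.adjoin_le ?_
    rintro _ ⟨f, hf, -, rfl⟩
    exact hm.leadingTerm_mem_adjoin ((mem_symmetricSubalgebra f).mp hf)
  · have hprod (k : ℕ) (hk : k ≤ 3) := hm.prod_X_mem_initialAlgebra hk
    rw [Algebra.adjoin_le_iff]
    rintro _ (rfl | rfl | rfl)
    · simpa [prod_filter, Fin.prod_univ_three] using hprod 1 (by norm_num)
    · simpa [prod_filter, Fin.prod_univ_three] using hprod 2 (by norm_num)
    · simpa [prod_filter, Fin.prod_univ_three] using hprod 3 (by norm_num)
end
end

section
/- The subalgebra A = Algebra.adjoin ℚ {X + Y, X·Y, X·Y²} of MvPolynomial (Fin 2) ℚ has no finite subalgebra basis with respect to the degree-lexicographic order with X > Y: there is no finite subset G of A such that for every nonzero a ∈ A the leading term in_m(a) lies in the ℚ-subalgebra generated by { in_m(g) : g ∈ G, g ≠ 0 }. -/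
open MvPolynomial

noncomputable section

variable {n : ℕ}

/-!
Every element of `ℚ[X+Y, XY, XY²]` has equal coefficients at `Xᵏ` and `Yᵏ`, so under deg-lex no
nonzero element has leading monomial `Yᵇ` with `b > 0`. Hence the leading exponents of a finite
`G` generate a monoid in which every nonzero element involves `X`, and its elements of `X`-degree
`1` are then sums with a single nonzero summand, so their `Y`-degree is bounded. But `XYᶜ` lies in
the algebra for every `c ≥ 1`, since `XYᶜ⁺² = XYᶜ⁺¹ (X + Y) - XYᶜ · XY`, and is its own leading term.
-/

namespace MvPolynomial

variable {σ R : Type*} [CommSemiring R]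

variable (R) in
def restrictSupportSubalgebra (M : AddSubmonoid (σ →₀ ℕ)) : Subalgebra R (MvPolynomial σ R) where
  carrier := restrictSupport R (M : Set (σ →₀ ℕ))
  add_mem' := Submodule.add_mem _
  mul_mem' {p q} hp hq := by
    have hpq := restrictSupport_add R (M : Set (σ →₀ ℕ)) M ▸ Submodule.mul_mem_mul hp hq
    rwa [AddSubmonoid.coe_add_self_eq] at hpq
  algebraMap_mem' r := by
    rw [SetLike.mem_coe, algebraMap_eq, C_apply, monomial_mem_restrictSupport]
    exact .inl M.zero_mem

variable (R) in
def purePowerCoeffEq (i j : σ) : Subalgebra R (MvPolynomial σ R) where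
  carrier := {f | ∀ k, f.coeff (Finsupp.single i k) = f.coeff (Finsupp.single j k)}
  add_mem' hf hg k := by simp only [coeff_add, hf k, hg k]
  mul_mem' {f g} hf hg k := by
    classical
    simp only [coeff_mul, Finsupp.antidiagonal_single, Finset.sum_map]
    exact Finset.sum_congr rfl fun p _ => by simp [hf p.1, hg p.2]
  algebraMap_mem' r k := by
    classical
    simp only [algebraMap_eq, coeff_C, Finsupp.single_eq_zero, eq_comm]

theorem mem_restrictSupportSubalgebra {M : AddSubmonoid (σ →₀ ℕ)} {p : MvPolynomial σ R} :
    p ∈ restrictSupportSubalgebra R M ↔ p ∈ restrictSupport R (M : Set (σ →₀ ℕ)) :=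
  .rfl

theorem X_mul_X_pow_eq_monomial (i j : σ) (c : ℕ) :
    (X i * X j ^ c : MvPolynomial σ R) = monomial (Finsupp.single i 1 + Finsupp.single j c) 1 := by
  rw [X, X_pow_eq_monomial, monomial_mul, one_mul]

end MvPolynomial

open MvPolynomial

namespace MonomialOrder

theorem degree'_eq_degree (m : MonomialOrder (Fin n)) (f : MvPolynomial (Fin n) ℚ) :
    m.degree' f = m.degree f :=
  rfl

theorem leadTerm_monomial (m : MonomialOrder (Fin n)) (d : Fin n →₀ ℕ) (c : ℚ) :
    m.leadTerm (monomial d c) = monomial d c := by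
  classical
  by_cases hc : c = 0
  · simp [leadTerm, hc]
  · rw [leadTerm, degree'_eq_degree, degree_monomial, if_neg hc, coeff_monomial, if_pos rfl]

theorem IsDegLex.toSyn_single_lt_single {m : MonomialOrder (Fin n)} (hm : m.IsDegLex)
    {i j : Fin n} (hij : i < j) {b : ℕ} (hb : b ≠ 0) :
    m.toSyn (Finsupp.single j b) < m.toSyn (Finsupp.single i b) := by
  rw [hm]
  refine .inr ⟨by simp [Finsupp.sum_single_index], Finsupp.Lex.lt_iff.2 ⟨i, fun l hl => ?_, ?_⟩⟩
  · simp [Finsupp.single_eq_of_ne hl.ne, Finsupp.single_eq_of_ne (hl.trans hij).ne]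
  · simp [Finsupp.single_eq_of_ne hij.ne, Nat.pos_of_ne_zero hb]

end MonomialOrder

def boundedLinearSlice {σ : Type*} (i j : σ) (B : ℕ) : AddSubmonoid (σ →₀ ℕ) where
  carrier := {d | (d i = 0 → d = 0) ∧ (d i = 1 → d j ≤ B)}
  zero_mem' := ⟨fun _ => rfl, by simp⟩
  add_mem' {d e} := by
    rintro ⟨hd₀, hd₁⟩ ⟨he₀, he₁⟩
    refine ⟨fun h => ?_, fun h => ?_⟩ <;> rw [Finsupp.add_apply] at h
    · rw [hd₀ (by omega), he₀ (by omega), add_zero]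
    · rcases Nat.eq_zero_or_pos (d i) with hdi | hdi
      · simp [hd₀ hdi, he₁ (by omega)]
      · simp [he₀ (by omega), hd₁ (by omega)]

local notation "𝒜" => Algebra.adjoin ℚ ({X 0 + X 1, X 0 * X 1, X 0 * X 1 ^ 2} : Set (MvPolynomial (Fin 2) ℚ))

theorem adjoin_le_purePowerCoeffEq : 𝒜 ≤ purePowerCoeffEq ℚ 0 1 := by
  have hXY (c : ℕ) : X 0 * X 1 ^ (c + 1) ∈ purePowerCoeffEq ℚ (0 : Fin 2) 1 := fun k => by
    classical
    simp [X_mul_X_pow_eq_monomial, coeff_monomial, Finsupp.ext_iff, Fin.forall_fin_two]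
  rw [Algebra.adjoin_le_iff]
  rintro p (rfl | rfl | rfl)
  · intro k
    classical
    simp [coeff_X, Finsupp.single_eq_single_iff]
  · simpa using hXY 0
  · exact hXY 1

theorem X_zero_mul_X_one_pow_mem (c : ℕ) : X 0 * X 1 ^ (c + 1) ∈ 𝒜 := by
  have hsum : X 0 + X 1 ∈ 𝒜 := Algebra.subset_adjoin (by simp)
  have hXY : X 0 * X 1 ∈ 𝒜 := Algebra.subset_adjoin (by simp)
  induction c using Nat.twoStepInduction with
  | zero => simpa using hXY
  | one => exact Algebra.subset_adjoin (by simp)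
  | more c ih₀ ih₁ =>
    rw [show (X 0 * X 1 ^ (c + 2 + 1) : MvPolynomial (Fin 2) ℚ) =
        X 0 * X 1 ^ (c + 1 + 1) * (X 0 + X 1) - X 0 * X 1 ^ (c + 1) * (X 0 * X 1) by ring]
    exact sub_mem (mul_mem ih₁ hsum) (mul_mem ih₀ hXY)

theorem degree_eq_zero_of_degree_apply_zero_eq_zero {m : MonomialOrder (Fin 2)} (hm : m.IsDegLex)
    {f : MvPolynomial (Fin 2) ℚ} (hf : f ∈ 𝒜) (h0 : m.degree f 0 = 0) : m.degree f = 0 := by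
  set b := m.degree f 1
  have hd : m.degree f = Finsupp.single 1 b := by
    ext i; fin_cases i <;> simp [h0, b]
  by_contra hne
  have hb : b ≠ 0 := by intro hb; simp [hd, hb] at hne
  have hsupp : Finsupp.single 0 b ∈ f.support := by
    rw [mem_support_iff, adjoin_le_purePowerCoeffEq hf b, ← hd, m.coeff_degree_ne_zero_iff]
    exact m.ne_zero_of_degree_ne_zero hne
  exact (m.le_degree hsupp).not_gt (hd ▸ hm.toSyn_single_lt_single Fin.zero_lt_one hb)

/-- `ℚ[X+Y, XY, XY²]` has no finite subalgebra basis with respect to deg-lex. -/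
theorem no_finite_subalgebraBasis (m : MonomialOrder (Fin 2)) (hm : m.IsDegLex) :
    ¬ ∃ G : Set (MvPolynomial (Fin 2) ℚ),
      G ⊆ (Algebra.adjoin ℚ ({X 0 + X 1, X 0 * X 1, X 0 * X 1 ^ 2} :
          Set (MvPolynomial (Fin 2) ℚ)) : Set (MvPolynomial (Fin 2) ℚ)) ∧
      G.Finite ∧
      ∀ a ∈ Algebra.adjoin ℚ ({X 0 + X 1, X 0 * X 1, X 0 * X 1 ^ 2} :
          Set (MvPolynomial (Fin 2) ℚ)), a ≠ 0 →
        m.leadTerm a ∈ Algebra.adjoin ℚ {p | ∃ g ∈ G, g ≠ 0 ∧ p = m.leadTerm g} := by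
  rintro ⟨G, hGA, hGfin, hG⟩
  obtain ⟨B, hB⟩ := (hGfin.image fun g => m.degree g 1).bddAbove
  have hdeg : AddSubmonoid.closure (m.degree '' G) ≤ boundedLinearSlice 0 1 B := by
    rw [AddSubmonoid.closure_le]
    rintro _ ⟨g, hg, rfl⟩
    exact ⟨degree_eq_zero_of_degree_apply_zero_eq_zero hm (hGA hg), fun _ => hB ⟨g, hg, rfl⟩⟩
  have hlead : Algebra.adjoin ℚ {p | ∃ g ∈ G, g ≠ 0 ∧ p = m.leadTerm g} ≤
      restrictSupportSubalgebra ℚ (AddSubmonoid.closure (m.degree '' G)) := by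
    rw [Algebra.adjoin_le_iff]
    rintro _ ⟨g, hg, -, rfl⟩
    exact (monomial_mem_restrictSupport ℚ).2 (.inl (AddSubmonoid.subset_closure ⟨g, hg, rfl⟩))
  have hmem := hlead (hG _ (X_zero_mul_X_one_pow_mem B) (by simp))
  rw [X_mul_X_pow_eq_monomial, m.leadTerm_monomial, mem_restrictSupportSubalgebra,
    monomial_mem_restrictSupport] at hmem
  have := (hdeg (hmem.resolve_right one_ne_zero)).2 (by simp)
  simp at this
end
end
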